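/- arXiv:2407.12660 — 9 statements merged into one kernel-verified Lean document; each statement's English description precedes it below -/
import Mathlib

section
/- Two elementary vectors of a subspace with the same support are scalar multiples of each other. -/
/-- `v` is an elementary vector of the subspace `V`: a nonzero vector of `V` with minimal
support among nonzero vectors of `V`. -/
def IsElementary {Q : Type*} [Field Q] {n : ℕ} (V : Submodule Q (Fin n → Q))
    (v : Fin n → Q) : Prop :=
  v ∈ V ∧ v ≠ 0 ∧
    ∀ x ∈ V, x ≠ 0 → {i | x i ≠ 0} ⊆ {i | v i ≠ 0} → {i | x i ≠ 0} = {i | v i ≠ 0}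

/-! The difference `w - (w i / v i) • v` lies in `V`, is supported inside `supp v` and vanishes
at `i`; minimality of `supp v` forces it to be zero. -/

namespace IsElementary

variable {Q : Type*} [Field Q] {n : ℕ} {V : Submodule Q (Fin n → Q)} {v w : Fin n → Q}

theorem exists_smul_eq_of_support_subset (hv : IsElementary V v) (hw : w ∈ V)
    (hsub : {i | w i ≠ 0} ⊆ {i | v i ≠ 0}) : ∃ c : Q, w = c • v := by
  obtain ⟨hvV, hv0, hvmin⟩ := hv
  obtain ⟨i, hi⟩ : ∃ i, v i ≠ 0 := Function.ne_iff.mp hv0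
  refine ⟨w i / v i, sub_eq_zero.mp ?_⟩
  set x := w - (w i / v i) • v
  have hxV : x ∈ V := V.sub_mem hw (V.smul_mem _ hvV)
  have hxi : x i = 0 := by simp [x, div_mul_cancel₀ _ hi]
  have hxsub : {j | x j ≠ 0} ⊆ {j | v j ≠ 0} := by
    intro j hxj hvj
    have hwj : w j = 0 := not_not.mp fun hwj => hsub hwj hvj
    exact hxj (by simp [x, hvj, hwj])
  by_contra hx0
  have hi_mem : i ∈ {j | x j ≠ 0} := (hvmin x hxV hx0 hxsub).symm ▸ hi
  exact hi_mem hxi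

end IsElementary

theorem elementary_same_support_multiple {Q : Type*} [Field Q] {n : ℕ}
    (V : Submodule Q (Fin n → Q)) (v w : Fin n → Q)
    (hv : IsElementary V v) (hw : IsElementary V w)
    (h : {i | v i ≠ 0} = {i | w i ≠ 0}) : ∃ c : Q, w = c • v :=
  hv.exists_smul_eq_of_support_subset hw.1 h.ge
end

section
/- Every linear subspace of Q^n is spanned by its elementary vectors. -/
theorem span_elementary_eq {Q : Type*} [Field Q] {n : ℕ} (V : Submodule Q (Fin n → Q)) :
    Submodule.span Q {v : Fin n → Q | IsElementary V v} = V := by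
  apply le_antisymm
  · rw [Submodule.span_le]
    intro v hv
    exact hv.1
  · suffices H : ∀ k (v : Fin n → Q), v ∈ V → {i | v i ≠ 0}.ncard ≤ k →
        v ∈ Submodule.span Q {v : Fin n → Q | IsElementary V v} by
      intro v hv
      exact H _ v hv le_rfl
    intro k
    induction k with
    | zero =>
      intro v hv hc
      have : {i | v i ≠ 0} = ∅ := by
        rw [← Set.ncard_eq_zero (Set.toFinite _)]
        omega
      have hv0 : v = 0 := funext fun i => by
        have h := Set.eq_empty_iff_forall_notMem.mp this i
        simpa using h
      simp [hv0]
    | succ k ih =>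
      intro v hv hc
      by_cases h0 : v = 0
      · simp [h0]
      by_cases he : IsElementary V v
      · exact Submodule.subset_span he
      · have : ∃ x, x ∈ V ∧ x ≠ 0 ∧ {i | x i ≠ 0} ⊆ {i | v i ≠ 0} ∧
            {i | x i ≠ 0} ≠ {i | v i ≠ 0} := by
          by_contra hcon
          push_neg at hcon
          exact he ⟨hv, h0, fun x hx hx0 hsub => hcon x hx hx0 hsub⟩
        obtain ⟨x, hxV, hx0, hsub, hne⟩ := this
        have hss : {i | x i ≠ 0} ⊂ {i | v i ≠ 0} := ⟨hsub, fun h => hne (le_antisymm hsub h)⟩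
        have hxcard : {i | x i ≠ 0}.ncard ≤ k := by
          have := Set.ncard_lt_ncard hss (Set.toFinite _)
          omega
        -- pick i with x i ≠ 0
        obtain ⟨i, hi⟩ : ∃ i, x i ≠ 0 := by
          by_contra hcon
          push_neg at hcon
          exact hx0 (funext fun i => hcon i)
        set c : Q := v i / x i with hcdef
        set v' : Fin n → Q := v - c • x with hv'def
        have hv'V : v' ∈ V := V.sub_mem hv (V.smul_mem c hxV)
        have hv'i : v' i = 0 := by
          simp [hv'def, hcdef, div_mul_cancel₀ _ hi]
        have hv'sub : {j | v' j ≠ 0} ⊆ {j | v j ≠ 0} := by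
          intro j hj
          simp only [Set.mem_setOf_eq] at hj ⊢
          intro hvj
          apply hj
          by_cases hxj : x j = 0
          · simp [hv'def, hvj, hxj]
          · exact absurd (hsub hxj) (by simp [hvj])
        have hiv : v i ≠ 0 := hsub hi
        have hv'ss : {j | v' j ≠ 0} ⊂ {j | v j ≠ 0} := by
          refine ⟨hv'sub, fun h => ?_⟩
          have : v' i ≠ 0 := h hiv
          exact this hv'i
        have hv'card : {j | v' j ≠ 0}.ncard ≤ k := by
          have := Set.ncard_lt_ncard hv'ss (Set.toFinite _)
          omega
        have h1 := ih v' hv'V hv'card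
        have h2 := ih x hxV hxcard
        have : v = v' + c • x := by simp [hv'def]
        rw [this]
        exact Submodule.add_mem _ h1 (Submodule.smul_mem _ c h2)
end

section
/- Every nonzero vector of a subspace has support containing the support of some elementary vector of the subspace. -/
theorem exists_elementary_support_subset {Q : Type*} [Field Q] {n : ℕ}
    (V : Submodule Q (Fin n → Q)) (x : Fin n → Q) (hx : x ∈ V) (hx0 : x ≠ 0) :
    ∃ v : Fin n → Q, IsElementary V v ∧ {i | v i ≠ 0} ⊆ {i | x i ≠ 0} := by
  obtain ⟨N, hN⟩ : ∃ N, ({i | x i ≠ 0} : Set (Fin n)).ncard = N := ⟨_, rfl⟩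
  induction N using Nat.strong_induction_on generalizing x with
  | _ N ih =>
    by_cases hel : ∀ y ∈ V, y ≠ 0 → {i | y i ≠ 0} ⊆ {i | x i ≠ 0} →
        {i | y i ≠ 0} = {i | x i ≠ 0}
    · exact ⟨x, ⟨hx, hx0, hel⟩, subset_rfl⟩
    · push_neg at hel
      obtain ⟨y, hyV, hy0, hsub, hne⟩ := hel
      have hss : ({i | y i ≠ 0} : Set (Fin n)) ⊂ {i | x i ≠ 0} := ⟨hsub, fun h => hne (hsub.antisymm h)⟩
      have hlt : ({i | y i ≠ 0} : Set (Fin n)).ncard < N := by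
        rw [← hN]
        exact Set.ncard_lt_ncard hss (Set.toFinite _)
      obtain ⟨v, hv, hvsub⟩ := ih _ hlt y hyV hy0 rfl
      exact ⟨v, hv, hvsub.trans hsub⟩
end

section
/- With M, I, and v as in the Cramer-type formula (v_i = (-1)^{|{k ∈ I : k < i}|} det(M_{I∖{i}}) for i ∈ I, zero otherwise), if the submatrix M_I has rank d, then v is a nonzero vector with minimal support in ker M, i.e., v is an elementary vector of ker M. -/
/-- The Cramer-type vector associated to `M` and an index set `I`:
`v i = (-1) ^ |{k ∈ I : k < i}| * det M_{I \ {i}}` for `i ∈ I`, and `v i = 0` otherwise. -/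
noncomputable def cramerVec {R : Type*} [CommRing R] {d n : ℕ}
    (M : Matrix (Fin d) (Fin n) R) (I : Finset (Fin n)) : Fin n → R :=
  fun i =>
    if h : i ∈ I ∧ (I.erase i).card = d then
      (-1 : R) ^ (I.filter (fun k => k < i)).card *
        (M.submatrix id (fun k : Fin d => ((I.erase i).orderIsoOfFin h.2 k : Fin n))).det
    else 0

/-! Over the fraction field, `A = M_I` is a `d × (d + 1)` matrix of rank `d`, so its kernel is a
line. The signed maximal minors of `A` lie in that line (Laplace expansion of `A` with one row
repeated), and they do not all vanish: if the minor omitting column `j` were singular, a kernel vector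
of that minor, padded with a zero at `j`, would be a kernel vector of `A` vanishing at a coordinate
where the line does not. The Cramer vector is this vector extended by zero off `I`, and a kernel
vector of `M` supported in `I` restricts to the kernel of `A`, hence is a multiple of it. -/

open Function Module Matrix

theorem Submodule.exists_eq_smul_of_finrank_eq_one {K V : Type*} [Field K] [AddCommGroup V]
    [Module K V] {W : Submodule K V} (hW : finrank K W = 1) {x y : V} (hx : x ∈ W) (hy : y ∈ W)
    (hy0 : y ≠ 0) : ∃ c : K, x = c • y := by
  obtain ⟨c, hc⟩ :=
    (finrank_eq_one_iff_of_nonzero' (⟨y, hy⟩ : W) (by simpa using hy0)).mp hW ⟨x, hx⟩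
  exact ⟨c, congrArg Subtype.val hc.symm⟩

namespace Matrix

theorem mulVec_extend_zero {R m ι κ : Type*} [NonUnitalNonAssocSemiring R] [Fintype ι]
    [Fintype κ] (M : Matrix m ι R) {f : κ → ι} (hf : Injective f) (y : κ → R) :
    M *ᵥ extend f y 0 = M.submatrix id f *ᵥ y := by
  funext r
  refine (Fintype.sum_of_injective f hf _ _ (fun i hi => ?_) fun k => ?_).symm
  · simp [extend_apply' _ _ _ hi]
  · simp [hf.extend_apply]

section SignedMaximalMinors

variable {R : Type*} [CommRing R] {d : ℕ}

def signedMaximalMinors (A : Matrix (Fin d) (Fin (d + 1)) R) : Fin (d + 1) → R :=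
  fun j => (-1) ^ (j : ℕ) * (A.submatrix id j.succAbove).det

theorem mulVec_signedMaximalMinors (A : Matrix (Fin d) (Fin (d + 1)) R) :
    A *ᵥ signedMaximalMinors A = 0 := by
  funext r
  have hrep : (of (vecCons (A r) A) : Matrix (Fin (d + 1)) (Fin (d + 1)) R).det = 0 :=
    det_zero_of_row_eq (Fin.succ_ne_zero r).symm rfl
  have hminor (j : Fin (d + 1)) :
      (of (vecCons (A r) A)).submatrix Fin.succ j.succAbove = A.submatrix id j.succAbove := rfl
  rw [det_succ_row_zero] at hrep
  simp only [mulVec, dotProduct, Pi.zero_apply, ← hrep]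
  refine Finset.sum_congr rfl fun j _ => ?_
  simp only [signedMaximalMinors, hminor, of_apply]
  rw [show vecCons (A r) A 0 = A r from rfl]
  ring

end SignedMaximalMinors

variable {K : Type*} [Field K] {d : ℕ}

theorem finrank_ker_mulVecLin_eq_one {m : Type*} {A : Matrix m (Fin (d + 1)) K}
    (hA : A.rank = d) : finrank K (LinearMap.ker A.mulVecLin) = 1 := by
  have := LinearMap.finrank_range_add_finrank_ker A.mulVecLin
  rw [finrank_fin_fun] at this
  rw [rank] at hA
  omega

theorem signedMaximalMinors_ne_zero {A : Matrix (Fin d) (Fin (d + 1)) K} (hA : A.rank = d) :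
    signedMaximalMinors A ≠ 0 := by
  have hker := finrank_ker_mulVecLin_eq_one hA
  obtain ⟨⟨z, hz⟩, hz0⟩ := finrank_pos_iff_exists_ne_zero.mp (hker ▸ one_pos)
  replace hz0 : z ≠ 0 := by simpa using hz0
  obtain ⟨j, hj⟩ : ∃ j, z j ≠ 0 := ne_iff.mp hz0
  have hdet : (A.submatrix id j.succAbove).det ≠ 0 := by
    intro h0
    obtain ⟨y, hy0, hy⟩ := exists_mulVec_eq_zero_iff.mpr h0
    have hw : extend j.succAbove y 0 ∈ LinearMap.ker A.mulVecLin := by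
      simp [mulVec_extend_zero A Fin.succAbove_right_injective, hy]
    obtain ⟨c, hc⟩ := Submodule.exists_eq_smul_of_finrank_eq_one hker hw hz hz0
    have hc0 : c = 0 := by
      simpa [extend_apply' _ _ _ (fun ⟨k, hk⟩ => Fin.succAbove_ne j k hk), hj] using congrFun hc j
    apply hy0
    funext k
    simpa [hc0, Fin.succAbove_right_injective.extend_apply] using congrFun hc (j.succAbove k)
  exact fun h => mul_ne_zero (by simp) hdet (congrFun h j)

end Matrix

section IsElementary

variable {K : Type*} [Field K] {n : ℕ}

theorem isElementary_of_forall_eq_smul {V : Submodule K (Fin n → K)} {v : Fin n → K} (hv : v ∈ V)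
    (hv0 : v ≠ 0) (h : ∀ x ∈ V, {i | x i ≠ 0} ⊆ {i | v i ≠ 0} → ∃ c : K, x = c • v) :
    IsElementary V v := by
  refine ⟨hv, hv0, fun x hx hx0 hsupp => ?_⟩
  obtain ⟨c, rfl⟩ := h x hx hsupp
  have hc : c ≠ 0 := by
    rintro rfl
    exact hx0 (zero_smul K v)
  ext i
  simp [hc]

theorem isElementary_extend_zero {m κ : Type*} [Fintype κ] {M : Matrix m (Fin n) K}
    {f : κ → Fin n} (hf : Injective f)
    (hker : finrank K (LinearMap.ker (M.submatrix id f).mulVecLin) = 1)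
    {c : κ → K} (hc : M.submatrix id f *ᵥ c = 0) (hc0 : c ≠ 0) :
    IsElementary (LinearMap.ker M.mulVecLin) (extend f c 0) := by
  refine isElementary_of_forall_eq_smul (by simp [mulVec_extend_zero M hf, hc]) ?_
    fun x hx hsupp => ?_
  · obtain ⟨k, hk⟩ : ∃ k, c k ≠ 0 := ne_iff.mp hc0
    exact fun h => hk (by simpa [hf.extend_apply] using congrFun h (f k))
  · have hx_eq : x = extend f (x ∘ f) 0 := by
      funext i
      by_cases hi : ∃ k, f k = i
      · obtain ⟨k, rfl⟩ := hi
        rw [hf.extend_apply]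
        rfl
      · rw [extend_apply' _ _ _ hi]
        by_contra hxi
        exact hsupp hxi (extend_apply' _ _ _ hi)
    have hxf : x ∘ f ∈ LinearMap.ker (M.submatrix id f).mulVecLin := by
      rwa [hx_eq, LinearMap.mem_ker, mulVecLin_apply, mulVec_extend_zero M hf] at hx
    obtain ⟨t, ht⟩ := Submodule.exists_eq_smul_of_finrank_eq_one hker hxf hc hc0
    exact ⟨t, by rw [hx_eq, ht, ← extend_smul, smul_zero]⟩

end IsElementary

namespace Finset

variable {α : Type*} [LinearOrder α]

theorem card_filter_lt_orderEmbOfFin (I : Finset α) {k : ℕ} (hI : I.card = k) (j : Fin k) :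
    (I.filter (· < I.orderEmbOfFin hI j)).card = j := by
  have himg : I.filter (· < I.orderEmbOfFin hI j) = (Iio j).image (I.orderEmbOfFin hI) := by
    ext x
    simp only [mem_filter, mem_image, mem_Iio]
    constructor
    · rintro ⟨hx, hlt⟩
      obtain ⟨m, rfl⟩ : x ∈ Set.range (I.orderEmbOfFin hI) := by simpa using hx
      exact ⟨m, (I.orderEmbOfFin hI).lt_iff_lt.mp hlt, rfl⟩
    · rintro ⟨m, hm, rfl⟩
      exact ⟨orderEmbOfFin_mem .., (I.orderEmbOfFin hI).lt_iff_lt.mpr hm⟩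
  rw [himg, card_image_of_injective _ (I.orderEmbOfFin hI).injective, Fin.card_Iio]

theorem orderEmbOfFin_erase_orderEmbOfFin (I : Finset α) {k : ℕ} (hI : I.card = k + 1)
    (j : Fin (k + 1)) (h : (I.erase (I.orderEmbOfFin hI j)).card = k) (m : Fin k) :
    (I.erase (I.orderEmbOfFin hI j)).orderEmbOfFin h m = I.orderEmbOfFin hI (j.succAbove m) := by
  refine congrFun (orderEmbOfFin_unique h (fun m => ?_)
    ((I.orderEmbOfFin hI).strictMono.comp (Fin.strictMono_succAbove j))).symm m
  exact mem_erase.mpr ⟨(I.orderEmbOfFin hI).injective.ne (j.succAbove_ne m),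
    orderEmbOfFin_mem ..⟩

end Finset

section CramerVec

variable {R : Type*} [CommRing R] {d n : ℕ}

theorem cramerVec_map {S : Type*} [CommRing S] (φ : R →+* S) (M : Matrix (Fin d) (Fin n) R)
    (I : Finset (Fin n)) : cramerVec (M.map φ) I = fun i => φ (cramerVec M I i) := by
  funext i
  unfold cramerVec
  split_ifs <;> simp [RingHom.map_det, submatrix_map]

theorem cramerVec_eq_extend_signedMaximalMinors (M : Matrix (Fin d) (Fin n) R)
    (I : Finset (Fin n)) (hI : I.card = d + 1) :
    cramerVec M I = extend (I.orderEmbOfFin hI)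
      (signedMaximalMinors (M.submatrix id (I.orderEmbOfFin hI))) 0 := by
  funext i
  by_cases hi : i ∈ I
  · obtain ⟨j, rfl⟩ : i ∈ Set.range (I.orderEmbOfFin hI) := by simpa using hi
    have h : (I.erase (I.orderEmbOfFin hI j)).card = d := by simp [Finset.card_erase_of_mem, hI]
    rw [(I.orderEmbOfFin hI).injective.extend_apply, cramerVec, dif_pos ⟨hi, h⟩,
      Finset.card_filter_lt_orderEmbOfFin]
    simp only [signedMaximalMinors, Finset.coe_orderIsoOfFin_apply,
      Finset.orderEmbOfFin_erase_orderEmbOfFin]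
    rfl
  · rw [extend_apply' _ _ _ fun ⟨j, hj⟩ => hi (hj ▸ Finset.orderEmbOfFin_mem ..), cramerVec,
      dif_neg (fun h => hi h.1), Pi.zero_apply]

end CramerVec

theorem cramerVec_elementary_general {R : Type*} [CommRing R] [IsDomain R] {d n : ℕ}
    (M : Matrix (Fin d) (Fin n) R)
    (I : Finset (Fin n)) (hI : I.card = d + 1)
    (hMI : ((M.map (algebraMap R (FractionRing R))).submatrix id
      (fun k : Fin (d + 1) => (I.orderIsoOfFin hI k : Fin n))).rank = d) :
    IsElementary (LinearMap.ker (M.map (algebraMap R (FractionRing R))).mulVecLin)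
      (fun i => algebraMap R (FractionRing R) (cramerVec M I i)) := by
  set A := (M.map (algebraMap R (FractionRing R))).submatrix id (I.orderEmbOfFin hI)
  have hA : A.rank = d := hMI
  rw [← cramerVec_map, cramerVec_eq_extend_signedMaximalMinors _ I hI]
  exact isElementary_extend_zero (I.orderEmbOfFin hI).injective (finrank_ker_mulVecLin_eq_one hA)
    (mulVec_signedMaximalMinors A) (signedMaximalMinors_ne_zero hA)

theorem cramerVec_elementary {R : Type*} [CommRing R] [IsDomain R] {d n : ℕ}
    (M : Matrix (Fin d) (Fin n) R)
    (hrank : (M.map (algebraMap R (FractionRing R))).rank = d)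
    (I : Finset (Fin n)) (hI : I.card = d + 1)
    (hMI : ((M.map (algebraMap R (FractionRing R))).submatrix id
      (fun k : Fin (d + 1) => (I.orderIsoOfFin hI k : Fin n))).rank = d) :
    IsElementary (LinearMap.ker (M.map (algebraMap R (FractionRing R))).mulVecLin)
      (fun i => algebraMap R (FractionRing R) (cramerVec M I i)) :=
  cramerVec_elementary_general M I hI hMI
end

section
/- (Minty's Lemma) For a subspace V of R^n and nonempty intervals I_1, …, I_n ⊆ R with product set I = I_1 × ⋯ × I_n, exactly one of the following holds: either there exists x ∈ V ∩ I, or there exists a vector v in the orthogonal complement V^⊥ such that vᵀz > 0 for all z ∈ I. -/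
/-!
A Hahn–Banach argument gives a nonzero `v ⊥ V` that is nonnegative on the box `I`. If it is not
strictly positive, it vanishes at some `z ∈ I`, and `z i` then minimises `v i * t` over `I i` for
every `i`. Freezing a coordinate `i` with `v i ≠ 0` at `z i` gives a face of the box which, after
translation by a point of `V`, lives in one dimension less; by induction some `w ⊥ V` is strictly
positive on that face, and `w + (|w i| / |v i|) • v` is strictly positive on the whole box.
-/

open Set
open scoped Pointwise

section Separation

variable {E : Type*} [NormedAddCommGroup E] [NormedSpace ℝ E] [FiniteDimensional ℝ E]

theorem exists_dual_ne_zero_nonneg_of_zero_notMem {S : Set E} (hS : Convex ℝ S) (hne : S.Nonempty)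
    (h0 : (0 : E) ∉ S) : ∃ f : Module.Dual ℝ E, f ≠ 0 ∧ ∀ x ∈ S, 0 ≤ f x := by
  by_cases hint : (interior S).Nonempty
  · obtain ⟨f, hf, hfS⟩ := geometric_hahn_banach_of_nonempty_interior_point hS
      (fun h ↦ h0 (interior_subset h)) hint
    refine ⟨-(f : E →ₗ[ℝ] ℝ), fun h ↦ hf (by ext x; simpa using congr($h x)), fun x hx ↦ ?_⟩
    simpa using hfS x hx
  · -- `S` lies in a proper affine subspace, on which a nonzero functional is constant.
    obtain ⟨s₀, hs₀⟩ := hne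
    have hdir : (affineSpan ℝ S).direction < ⊤ := by
      rw [lt_top_iff_ne_top, Ne, AffineSubspace.direction_eq_top_iff_of_nonempty
        ((affineSpan_nonempty ℝ).2 ⟨s₀, hs₀⟩), ← hS.interior_nonempty_iff_affineSpan_eq_top]
      exact hint
    obtain ⟨g, hg, hgker⟩ := Submodule.exists_le_ker_of_lt_top _ hdir
    have hconst : ∀ x ∈ S, g x = g s₀ := fun x hx ↦ by
      have := hgker (AffineSubspace.vsub_mem_direction (subset_affineSpan ℝ S hx)
        (subset_affineSpan ℝ S hs₀))
      simpa [sub_eq_zero] using this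
    rcases le_total 0 (g s₀) with h | h
    · exact ⟨g, hg, fun x hx ↦ (hconst x hx).symm ▸ h⟩
    · exact ⟨-g, neg_ne_zero.2 hg, fun x hx ↦ by simpa [hconst x hx] using h⟩

theorem Submodule.exists_dual_ne_zero_nonneg_of_disjoint (V : Submodule ℝ E) {s : Set E}
    (hs : Convex ℝ s) (hne : s.Nonempty) (hVs : Disjoint (V : Set E) s) :
    ∃ f : Module.Dual ℝ E, f ≠ 0 ∧ (∀ x ∈ V, f x = 0) ∧ ∀ z ∈ s, 0 ≤ f z := by
  have h0 : (0 : E) ∉ s - (V : Set E) := by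
    rintro ⟨z, hz, x, hx, hzx⟩
    rw [sub_eq_zero] at hzx
    exact disjoint_left.1 hVs hx (hzx ▸ hz)
  obtain ⟨f, hf, hfS⟩ := exists_dual_ne_zero_nonneg_of_zero_notMem (hs.sub V.convex)
    (hne.sub ⟨0, V.zero_mem⟩) h0
  obtain ⟨z₀, hz₀⟩ := hne
  refine ⟨f, hf, fun x hx ↦ ?_, fun z hz ↦ by simpa using hfS (z - 0) (sub_mem_sub hz V.zero_mem)⟩
  -- `f` is bounded below on the line `z₀ - ℝ x`, so it vanishes on `x`.
  by_contra hfx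
  have := hfS _ (sub_mem_sub hz₀ (V.smul_mem ((f z₀ + 1) / f x) hx))
  rw [map_sub, map_smul, smul_eq_mul, div_mul_cancel₀ _ hfx] at this
  linarith

end Separation

theorem LinearMap.exists_dual_comp_eq {K E F : Type*} [Field K] [AddCommGroup E] [Module K E]
    [AddCommGroup F] [Module K F] (φ : E →ₗ[K] F) (W : Submodule K F) {g : Module.Dual K E}
    (hg : ∀ x ∈ W.comap φ, g x = 0) :
    ∃ h : Module.Dual K F, (∀ y ∈ W, h y = 0) ∧ h ∘ₗ φ = g := by
  have hg' : g ∈ LinearMap.range (W.mkQ ∘ₗ φ).dualMap := by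
    rw [LinearMap.range_dualMap_eq_dualAnnihilator_ker, LinearMap.ker_comp, Submodule.ker_mkQ]
    exact (Submodule.mem_dualAnnihilator g).2 hg
  obtain ⟨ψ, hψ⟩ := hg'
  exact ⟨ψ ∘ₗ W.mkQ, fun y hy ↦ by simp [(Submodule.Quotient.mk_eq_zero W).2 hy], hψ⟩

section StrictSeparation

variable {ι : Type*} [Fintype ι]

def StrictlySeparates (v : ι → ℝ) (V : Submodule ℝ (ι → ℝ)) (s : Set (ι → ℝ)) : Prop :=
  (∀ x ∈ V, v ⬝ᵥ x = 0) ∧ ∀ z ∈ s, 0 < v ⬝ᵥ z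

theorem strictlySeparates_single [DecidableEq ι] {V : Submodule ℝ (ι → ℝ)} {s : Set (ι → ℝ)}
    {i : ι} {c : ℝ} (hV : ∀ x ∈ V, x i = 0) (hs : ∀ z ∈ s, z i = c) (hc : c ≠ 0) :
    StrictlySeparates (Pi.single i c) V s :=
  ⟨fun x hx ↦ by rw [single_dotProduct, hV x hx, mul_zero],
    fun z hz ↦ by rw [single_dotProduct, hs z hz]; exact mul_self_pos.2 hc⟩

theorem dotProductEquiv_symm_dotProduct [DecidableEq ι] (f : Module.Dual ℝ (ι → ℝ))
    (x : ι → ℝ) : (dotProductEquiv ℝ ι).symm f ⬝ᵥ x = f x := by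
  rw [← dotProductEquiv_apply_apply, LinearEquiv.apply_symm_apply]

theorem Submodule.exists_ne_zero_orthogonal_nonneg (V : Submodule ℝ (ι → ℝ)) {s : Set (ι → ℝ)}
    (hs : Convex ℝ s) (hne : s.Nonempty) (hVs : Disjoint (V : Set (ι → ℝ)) s) :
    ∃ v ≠ 0, (∀ x ∈ V, v ⬝ᵥ x = 0) ∧ ∀ z ∈ s, 0 ≤ v ⬝ᵥ z := by
  classical
  obtain ⟨f, hf, hfV, hfs⟩ := V.exists_dual_ne_zero_nonneg_of_disjoint hs hne hVs
  refine ⟨(dotProductEquiv ℝ ι).symm f, by simpa using hf, ?_, ?_⟩ <;>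
    simpa only [dotProductEquiv_symm_dotProduct]

theorem exists_strictlySeparates_of_comap {κ : Type*} [Fintype κ] {V : Submodule ℝ (ι → ℝ)}
    {s : Set (ι → ℝ)} (φ : (κ → ℝ) →ₗ[ℝ] (ι → ℝ)) {b : ι → ℝ} (hb : b ∈ V)
    (hs : s ⊆ range fun y ↦ φ y + b) {w : κ → ℝ}
    (hw : StrictlySeparates w (V.comap φ) ((fun y ↦ φ y + b) ⁻¹' s)) :
    ∃ v, StrictlySeparates v V s := by
  classical
  obtain ⟨h, hhV, hhφ⟩ := φ.exists_dual_comp_eq V (g := dotProductEquiv ℝ κ w) (by simpa using hw.1)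
  refine ⟨(dotProductEquiv ℝ ι).symm h,
    fun x hx ↦ by rw [dotProductEquiv_symm_dotProduct, hhV x hx], ?_⟩
  rintro _ hz
  obtain ⟨y, rfl⟩ := hs hz
  rw [dotProductEquiv_symm_dotProduct, map_add, hhV b hb, add_zero, ← LinearMap.comp_apply, hhφ,
    dotProductEquiv_apply_apply]
  exact hw.2 y hz

theorem dotProduct_eq_dotProduct_update_add [DecidableEq ι] (v z : ι → ℝ) (i : ι) (c : ℝ) :
    v ⬝ᵥ z = v ⬝ᵥ Function.update z i c + v i * (z i - c) := by
  calc v ⬝ᵥ z = v ⬝ᵥ (Function.update z i c + Pi.single i (z i - c)) := by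
        congr 1; ext j; rcases eq_or_ne j i with rfl | hj <;> simp [*]
    _ = _ := by rw [dotProduct_add, dotProduct_single]

theorem IsMinOn.mul_apply_of_dotProduct {I : ι → Set ℝ} {v z : ι → ℝ}
    (h : IsMinOn (v ⬝ᵥ ·) (univ.pi I) z) (hz : z ∈ univ.pi I) (i : ι) :
    IsMinOn (v i * ·) (I i) (z i) := by
  classical
  refine isMinOn_iff.2 fun t ht ↦ ?_
  have := isMinOn_iff.1 h _ ((update_mem_pi_iff_of_mem hz).2 fun _ ↦ ht)
  rw [dotProduct_eq_dotProduct_update_add v z i t, mul_sub] at this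
  linarith

theorem StrictlySeparates.add_smul_of_update [DecidableEq ι] {V : Submodule ℝ (ι → ℝ)}
    {I : ι → Set ℝ} {v w : ι → ℝ} {i : ι} {c : ℝ}
    (hw : StrictlySeparates w V (univ.pi (Function.update I i {c})))
    (hvV : ∀ x ∈ V, v ⬝ᵥ x = 0) (hvI : ∀ z ∈ univ.pi I, 0 ≤ v ⬝ᵥ z) (hvi : v i ≠ 0)
    (hc : c ∈ I i) (hcmin : IsMinOn (v i * ·) (I i) c) :
    StrictlySeparates (w + (|w i| / |v i|) • v) V (univ.pi I) := by
  set M := |w i| / |v i|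
  refine ⟨fun x hx ↦ by rw [add_dotProduct, smul_dotProduct, hw.1 x hx, hvV x hx, smul_zero,
    add_zero], fun z hz ↦ ?_⟩
  have hzI : Function.update z i c ∈ univ.pi I := (update_mem_pi_iff_of_mem hz).2 fun _ ↦ hc
  have hzJ : Function.update z i c ∈ univ.pi (Function.update I i {c}) := fun j _ ↦ by
    rcases eq_or_ne j i with rfl | hj
    · simp
    · simpa [hj] using hz j (mem_univ j)
  have hface : 0 < (w + M • v) ⬝ᵥ Function.update z i c := by
    rw [add_dotProduct, smul_dotProduct, smul_eq_mul]
    exact add_pos_of_pos_of_nonneg (hw.2 _ hzJ) (mul_nonneg (by positivity) (hvI _ hzI))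
  have hcoord : 0 ≤ (w + M • v) i * (z i - c) := by
    -- `v i * (z i - c) ≥ 0` and `M * |v i| = |w i|`, so the `M • v` part dominates.
    have hv : 0 ≤ v i * (z i - c) := by
      have := isMinOn_iff.1 hcmin (z i) (hz i (mem_univ i))
      rw [mul_sub]; linarith
    have hMv : M * (v i * (z i - c)) = |w i| * |z i - c| := by
      rw [← abs_of_nonneg hv, abs_mul, ← mul_assoc, div_mul_cancel₀ _ (abs_ne_zero.2 hvi)]
    have hw : -(w i * (z i - c)) ≤ |w i| * |z i - c| := by rw [← abs_mul]; exact neg_le_abs _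
    simp only [Pi.add_apply, Pi.smul_apply, smul_eq_mul]
    linarith [add_mul (w i) (M * v i) (z i - c), mul_assoc M (v i) (z i - c)]
  rw [dotProduct_eq_dotProduct_update_add _ z i c]
  exact add_pos_of_pos_of_nonneg hface hcoord

end StrictSeparation

def BoxesStrictlySeparable (n : ℕ) : Prop :=
  ∀ (V : Submodule ℝ (Fin n → ℝ)) (I : Fin n → Set ℝ), (∀ i, (I i).OrdConnected) →
    Disjoint (V : Set (Fin n → ℝ)) (univ.pi I) → ∃ v, StrictlySeparates v V (univ.pi I)

namespace BoxesStrictlySeparable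

variable {n : ℕ}

theorem of_eq_singleton (ih : BoxesStrictlySeparable n) {V : Submodule ℝ (Fin (n + 1) → ℝ)}
    {I : Fin (n + 1) → Set ℝ} (hI : ∀ j, (I j).OrdConnected)
    (hVI : Disjoint (V : Set (Fin (n + 1) → ℝ)) (univ.pi I)) {i : Fin (n + 1)} {c : ℝ}
    (hIi : I i = {c}) : ∃ v, StrictlySeparates v V (univ.pi I) := by
  by_cases hb : ∃ b ∈ V, b i = c
  · -- Translated by `b`, the box is `{0}` along `i`, so the coordinate `i` can be dropped.
    obtain ⟨b, hbV, rfl⟩ := hb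
    let φ : (Fin n → ℝ) →ₗ[ℝ] (Fin (n + 1) → ℝ) :=
      { toFun := fun y ↦ Fin.insertNth (α := fun _ ↦ ℝ) i 0 y
        map_add' := fun x y ↦ by simpa using Fin.insertNth_add (α := fun _ ↦ ℝ) i 0 0 x y
        map_smul' := fun r x ↦ by ext j; refine Fin.succAboveCases i ?_ ?_ j <;> simp }
    have hpre : (fun y ↦ φ y + b) ⁻¹' univ.pi I =
        univ.pi fun j ↦ (· + b (i.succAbove j)) ⁻¹' I (i.succAbove j) := by
      ext y; simp [φ, Fin.forall_iff_succAbove i, hIi]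
    have hrange : univ.pi I ⊆ range fun y ↦ φ y + b := fun z hz ↦ by
      have hzb : (z - b) i = 0 := by simpa [hIi, sub_eq_zero] using hz i (mem_univ i)
      refine ⟨i.removeNth (z - b), ?_⟩
      simp only [φ, LinearMap.coe_mk, AddHom.coe_mk]
      rw [← hzb, Fin.insertNth_self_removeNth, sub_add_cancel]
    have hdisj : Disjoint (V.comap φ : Set (Fin n → ℝ)) ((fun y ↦ φ y + b) ⁻¹' univ.pi I) :=
      disjoint_left.2 fun y hy hyI ↦ disjoint_left.1 hVI (V.add_mem hy hbV) hyI
    rw [hpre] at hdisj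
    obtain ⟨w, hw⟩ := ih (V.comap φ) (fun j ↦ (· + b (i.succAbove j)) ⁻¹' I (i.succAbove j))
      (fun j ↦ (hI _).preimage_mono (monotone_id.add_const _)) hdisj
    exact exists_strictlySeparates_of_comap φ hbV hrange (hpre ▸ hw)
  · have hV : ∀ x ∈ V, x i = 0 := fun x hx ↦ by
      by_contra hx0
      exact hb ⟨(c / x i) • x, V.smul_mem _ hx, by simp [hx0]⟩
    have hc : c ≠ 0 := fun hc ↦ hb ⟨0, V.zero_mem, hc ▸ rfl⟩
    exact ⟨_, strictlySeparates_single hV (fun z hz ↦ by simpa [hIi] using hz i (mem_univ i)) hc⟩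

theorem succ (ih : BoxesStrictlySeparable n) : BoxesStrictlySeparable (n + 1) := by
  classical
  intro V I hI hVI
  rcases (univ.pi I).eq_empty_or_nonempty with hempty | hne
  · exact ⟨0, fun x _ ↦ zero_dotProduct x, by simp [hempty]⟩
  obtain ⟨v, hv0, hvV, hvI⟩ :=
    V.exists_ne_zero_orthogonal_nonneg (convex_pi fun j _ ↦ (hI j).convex) hne hVI
  by_cases hpos : ∀ z ∈ univ.pi I, 0 < v ⬝ᵥ z
  · exact ⟨v, hvV, hpos⟩
  obtain ⟨z, hz, hvz⟩ : ∃ z ∈ univ.pi I, v ⬝ᵥ z ≤ 0 := by simpa using hpos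
  have hmin : IsMinOn (v ⬝ᵥ ·) (univ.pi I) z := isMinOn_iff.2 fun y hy ↦ hvz.trans (hvI y hy)
  obtain ⟨i, hvi⟩ := Function.ne_iff.1 hv0
  have hJI : ∀ j, Function.update I i {z i} j ⊆ I j := fun j ↦ by
    rcases eq_or_ne j i with rfl | hj
    · simpa using hz j (mem_univ j)
    · simp [hj]
  have hJ : ∀ j, (Function.update I i {z i} j).OrdConnected := fun j ↦ by
    rcases eq_or_ne j i with rfl | hj
    · simpa using ordConnected_singleton
    · simpa [hj] using hI j
  obtain ⟨w, hw⟩ := ih.of_eq_singleton hJ (hVI.mono_right (pi_mono fun j _ ↦ hJI j))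
    (Function.update_self i _ I)
  exact ⟨_, hw.add_smul_of_update hvV hvI hvi (hz i (mem_univ i))
    (hmin.mul_apply_of_dotProduct hz i)⟩

end BoxesStrictlySeparable

theorem boxesStrictlySeparable : ∀ n, BoxesStrictlySeparable n
  | 0 => fun V _ _ hVI ↦ (disjoint_left.1 hVI V.zero_mem fun i ↦ i.elim0).elim
  | n + 1 => (boxesStrictlySeparable n).succ

theorem minty_lemma_general {n : ℕ} (V : Submodule ℝ (Fin n → ℝ)) (I : Fin n → Set ℝ)
    (hconn : ∀ i, (I i).OrdConnected) :
    Xor' (∃ x ∈ V, ∀ i, x i ∈ I i)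
      (∃ v : Fin n → ℝ, (∀ x ∈ V, ∑ i, v i * x i = 0) ∧
        ∀ z : Fin n → ℝ, (∀ i, z i ∈ I i) → 0 < ∑ i, v i * z i) := by
  refine xor_iff_iff_not.2 ⟨fun ⟨x, hxV, hxI⟩ ⟨v, hvV, hvI⟩ ↦ (hvI x hxI).ne' (hvV x hxV), fun hnot ↦ ?_⟩
  by_contra hdisj
  obtain ⟨v, hvV, hvI⟩ := boxesStrictlySeparable n V I hconn
    (disjoint_left.2 fun x hxV hxI ↦ hdisj ⟨x, hxV, fun i ↦ hxI i (mem_univ i)⟩)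
  exact hnot ⟨v, hvV, fun z hz ↦ hvI z fun i _ ↦ hz i⟩

theorem minty_lemma {n : ℕ} (V : Submodule ℝ (Fin n → ℝ)) (I : Fin n → Set ℝ)
    (hne : ∀ i, (I i).Nonempty) (hconn : ∀ i, (I i).OrdConnected) :
    Xor' (∃ x ∈ V, ∀ i, x i ∈ I i)
      (∃ v : Fin n → ℝ, (∀ x ∈ V, ∑ i, v i * x i = 0) ∧
        ∀ z : Fin n → ℝ, (∀ i, z i ∈ I i) → 0 < ∑ i, v i * z i) :=
  minty_lemma_general V I hconn
end

section
/- In Minty's alternative, the separating vector in V^⊥ can be chosen to be an elementary vector of V^⊥: if V ∩ (I_1 × ⋯ × I_n) = ∅ for nonempty intervals I_j, then there exists an elementary vector v ∈ V^⊥ with vᵀz > 0 for all z in the product of intervals. -/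
/-- The orthogonal complement of `V` in `ℝⁿ` with respect to the standard inner product. -/
def perp {n : ℕ} (V : Submodule ℝ (Fin n → ℝ)) : Submodule ℝ (Fin n → ℝ) where
  carrier := {v | ∀ x ∈ V, ∑ i, v i * x i = 0}
  add_mem' := by
    intro a b ha hb x hx
    simp only [Set.mem_setOf_eq, Pi.add_apply, add_mul, Finset.sum_add_distrib,
      ha x hx, hb x hx, add_zero]
  zero_mem' := by intro x hx; simp
  smul_mem' := by
    intro c a ha x hx
    simp only [Set.mem_setOf_eq, Pi.smul_apply, smul_eq_mul, mul_assoc,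
      ← Finset.mul_sum, ha x hx, mul_zero]

/-!
On a compact box the alternative is strict separation of the box from `V`. A vector of `perp V`
that is positive on a product of sets can be traded for an elementary one: a non-elementary `v`
splits as `a + b` with `a, b ∈ perp V` of smaller support, both conforming to `v`, and one of them
stays positive on the product. Elementary vectors with the same sign pattern are positive
multiples of each other, so if no elementary vector were positive on the box, finitely many
points of the box would refute all of them; the compact case applied to the convex hull of the
finite grid these points span then gives a contradiction.
-/

open Set Function

section Conforms

variable {ι : Type*}

def Conforms (u v : ι → ℝ) : Prop :=
  ∀ i, u i ≠ 0 → 0 < u i * v i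

variable {u v : ι → ℝ}

theorem Conforms.support_subset (h : Conforms u v) : support u ⊆ support v :=
  fun i hi hvi => by simpa [hvi] using h i hi

theorem Conforms.support_ssubset (h : Conforms u v) {j : ι} (huj : u j = 0)
    (hvj : v j ≠ 0) : support u ⊂ support v :=
  h.support_subset.ssubset_of_ne fun hs => (hs ▸ hvj : j ∈ support u) huj

theorem Conforms.smul (h : Conforms u v) {c : ℝ} (hc : 0 < c) :
    Conforms (c • u) v := fun i hi => by
  have hui : u i ≠ 0 := right_ne_zero_of_mul hi
  simpa [mul_assoc] using mul_pos hc (h i hui)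

theorem Conforms.mul_nonpos (h : Conforms u v) (i : ι) {d : ℝ}
    (hd : v i * d ≤ 0) : u i * d ≤ 0 := by
  by_cases hui : u i = 0
  · simp [hui]
  · have huv := h i hui
    nlinarith [sq_nonneg (u i)]

/-- From points of the box where `a` and `b` are nonpositive, picking coordinatewise the one on
which `a + b` is smaller gives a point where `a + b` is nonpositive. -/
theorem pos_or_pos_of_conforms_add [Fintype ι] {I : ι → Set ℝ} {a b : ι → ℝ}
    (ha : Conforms a (a + b)) (hb : Conforms b (a + b)) (h : ∀ z ∈ univ.pi I, 0 < (a + b) ⬝ᵥ z) :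
    (∀ z ∈ univ.pi I, 0 < a ⬝ᵥ z) ∨ ∀ z ∈ univ.pi I, 0 < b ⬝ᵥ z := by
  by_contra! ⟨⟨za, hza, haz⟩, ⟨zb, hzb, hbz⟩⟩
  set z : ι → ℝ := fun i => if (a + b) i * za i ≤ (a + b) i * zb i then za i else zb i
  have hz : z ∈ univ.pi I := fun i _ => by
    simp only [z]; split_ifs
    exacts [hza i trivial, hzb i trivial]
  have hza' : a ⬝ᵥ z ≤ a ⬝ᵥ za := Finset.sum_le_sum fun i _ => by
    have := ha.mul_nonpos i (d := z i - za i) (by simp only [z]; split_ifs <;> nlinarith)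
    linarith
  have hzb' : b ⬝ᵥ z ≤ b ⬝ᵥ zb := Finset.sum_le_sum fun i _ => by
    have := hb.mul_nonpos i (d := z i - zb i) (by simp only [z]; split_ifs <;> nlinarith)
    linarith
  have := h z hz
  rw [add_dotProduct] at this
  linarith

/-- Take `t = v j / x j` with `|v j / x j|` minimal. -/
theorem exists_conforms_sub_smul [Fintype ι] {x : ι → ℝ} (hx : x ≠ 0)
    (hxv : support x ⊆ support v) :
    ∃ j t, x j ≠ 0 ∧ v j = t * x j ∧ Conforms (v - t • x) v := by
  obtain ⟨j, hj, hmin⟩ := (Finset.univ.filter (x · ≠ 0)).exists_min_image (fun i => |v i / x i|)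
    (by simpa [Finset.filter_nonempty_iff, Function.ne_iff] using hx)
  have hxj : x j ≠ 0 := (Finset.mem_filter.mp hj).2
  refine ⟨j, v j / x j, hxj, by field_simp, fun i hi => ?_⟩
  by_cases hxi : x i = 0
  · simp only [Pi.sub_apply, Pi.smul_apply, hxi, smul_zero, sub_zero] at hi ⊢
    exact mul_self_pos.mpr hi
  have hvi : v i ≠ 0 := hxv hxi
  have hle : |v j / x j| ≤ |v i / x i| := hmin i (by simpa using hxi)
  have key : v j / x j * (v i / x i) ≤ (v i / x i) ^ 2 := by
    calc v j / x j * (v i / x i) ≤ |v j / x j| * |v i / x i| := by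
          rw [← abs_mul]; exact le_abs_self _
      _ ≤ |v i / x i| * |v i / x i| := by gcongr
      _ = (v i / x i) ^ 2 := by rw [abs_mul_abs_self, sq]
  have hnn : 0 ≤ (v - (v j / x j) • x) i * v i := by
    have : (v - (v j / x j) • x) i * v i =
        x i ^ 2 * ((v i / x i) ^ 2 - v j / x j * (v i / x i)) := by
      simp only [Pi.sub_apply, Pi.smul_apply, smul_eq_mul]; field_simp
    rw [this]; exact mul_nonneg (sq_nonneg _) (by linarith)
  exact lt_of_le_of_ne hnn (mul_ne_zero hi hvi).symm

end Conforms

theorem exists_conforms_add_of_not_isElementary {n : ℕ} {W : Submodule ℝ (Fin n → ℝ)}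
    {v : Fin n → ℝ} (hv : v ∈ W) (hv0 : v ≠ 0) (he : ¬IsElementary W v) :
    ∃ a ∈ W, ∃ b ∈ W, a + b = v ∧ Conforms a v ∧ Conforms b v ∧
      support a ⊂ support v ∧ support b ⊂ support v := by
  simp only [IsElementary, not_and, not_forall] at he
  obtain ⟨x, hxW, hx0, hxv, hne⟩ := he hv hv0
  obtain ⟨k, hvk, hxk⟩ := exists_of_ssubset (hxv.ssubset_of_ne hne)
  obtain ⟨j, t, hxj, hvj, hy⟩ := exists_conforms_sub_smul hx0 hxv
  set y := v - t • x
  have hy0 : y ≠ 0 :=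
    Function.ne_iff.mpr ⟨k, by simpa [y, show x k = 0 by simpa using hxk] using hvk⟩
  obtain ⟨j', t', hyj', hvj', hb⟩ := exists_conforms_sub_smul hy0 hy.support_subset
  have ht' : 0 < t' := by
    have := hy j' hyj'
    rw [hvj'] at this
    nlinarith [sq_pos_of_ne_zero hyj']
  refine ⟨t' • y, W.smul_mem _ (W.sub_mem hv (W.smul_mem _ hxW)), v - t' • y,
    W.sub_mem hv (W.smul_mem _ (W.sub_mem hv (W.smul_mem _ hxW))), add_sub_cancel _ _,
    hy.smul ht', hb, ?_, ?_⟩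
  · exact (hy.smul ht').support_ssubset (j := j) (by simp [y, hvj]) (hxv hxj)
  · exact hb.support_ssubset (j := j') (by simp [hvj']) (hy.support_subset hyj')

theorem exists_isElementary_pos_of_pos {n : ℕ} {W : Submodule ℝ (Fin n → ℝ)}
    {I : Fin n → Set ℝ} (hI : (univ.pi I).Nonempty) {v : Fin n → ℝ} (hv : v ∈ W)
    (hpos : ∀ z ∈ univ.pi I, 0 < v ⬝ᵥ z) :
    ∃ e, IsElementary W e ∧ ∀ z ∈ univ.pi I, 0 < e ⬝ᵥ z := by
  induction hk : (support v).ncard using Nat.strong_induction_on generalizing v with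
  | _ k ih =>
  by_cases he : IsElementary W v
  · exact ⟨v, he, hpos⟩
  have hv0 : v ≠ 0 := by
    rintro rfl
    obtain ⟨z, hz⟩ := hI
    simpa using hpos z hz
  obtain ⟨a, ha, b, hb, rfl, hav, hbv, has, hbs⟩ :=
    exists_conforms_add_of_not_isElementary hv hv0 he
  rcases pos_or_pos_of_conforms_add hav hbv hpos with h | h
  · exact ih _ (hk ▸ ncard_lt_ncard has) ha h rfl
  · exact ih _ (hk ▸ ncard_lt_ncard hbs) hb h rfl

theorem exists_mem_perp_pos_of_isCompact {n : ℕ} {V : Submodule ℝ (Fin n → ℝ)}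
    {K : Set (Fin n → ℝ)} (hKc : Convex ℝ K) (hK : IsCompact K) (hKV : Disjoint K V) :
    ∃ v ∈ perp V, ∀ z ∈ K, 0 < v ⬝ᵥ z := by
  obtain ⟨f, u, w, hfK, huw, hfV⟩ :=
    geometric_hahn_banach_compact_closed hKc hK V.convex V.closed_of_finiteDimensional hKV
  have hw : w < 0 := by simpa using hfV 0 V.zero_mem
  -- `f` is bounded below on the subspace `V`, hence vanishes on it
  have hfV0 : ∀ x ∈ V, f x = 0 := fun x hx => by
    by_contra hfx
    have := hfV _ (V.smul_mem (w / f x) hx)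
    rw [map_smul, smul_eq_mul, div_mul_cancel₀ _ hfx] at this
    exact this.false
  have hf : ∀ z, f z = ∑ i, z i * f (Pi.single i 1) := fun z => by
    have := LinearMap.congr_fun
      ((LinearEquiv.piRing ℝ ℝ (Fin n) ℝ).symm_apply_apply (f : (Fin n → ℝ) →ₗ[ℝ] ℝ)) z
    rw [LinearEquiv.piRing_symm_apply] at this
    simpa using this.symm
  refine ⟨fun i => -f (Pi.single i 1), fun x hx => ?_, fun z hz => ?_⟩
  · simpa [hf x, mul_comm] using hfV0 x hx
  · have h := hfK z hz
    rw [hf z] at h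
    simp only [dotProduct, neg_mul, Finset.sum_neg_distrib, mul_comm (z _)] at h ⊢
    linarith

theorem IsElementary.exists_pos_smul_eq {n : ℕ} {W : Submodule ℝ (Fin n → ℝ)}
    {e e' : Fin n → ℝ} (he : IsElementary W e) (he' : IsElementary W e')
    (hs : ∀ i, SignType.sign (e' i) = SignType.sign (e i)) : ∃ c : ℝ, 0 < c ∧ e' = c • e := by
  obtain ⟨j, hj⟩ : ∃ j, e j ≠ 0 := Function.ne_iff.mp he.2.1
  set c := e' j / e j
  have hd : e' - c • e = 0 := by
    by_contra hd
    have hsub : support (e' - c • e) ⊆ support e := fun i hi hei => by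
      have he'i : e' i = 0 := sign_eq_zero_iff.mp ((hs i).trans (sign_eq_zero_iff.mpr hei))
      simp [he'i, hei] at hi
    have hdj : (e' - c • e) j = 0 := by simp [c, div_mul_cancel₀ _ hj]
    have := he.2.2 _ (W.sub_mem he'.1 (W.smul_mem c he.1)) hd hsub
    exact (Set.ext_iff.mp this j).mpr hj hdj
  refine ⟨c, ?_, sub_eq_zero.mp hd⟩
  rcases hj.lt_or_gt with h | h
  · have : e' j < 0 := by rw [← sign_eq_neg_one_iff, hs j, sign_eq_neg_one_iff.mpr h]
    exact div_pos_of_neg_of_neg this h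
  · have : 0 < e' j := by rw [← sign_eq_one_iff, hs j, sign_eq_one_iff.mpr h]
    exact div_pos this h

theorem exists_mem_forall_sign_eq_dotProduct_nonpos {n : ℕ} {W : Submodule ℝ (Fin n → ℝ)}
    {K : Set (Fin n → ℝ)} (hK : K.Nonempty)
    (h : ∀ e, IsElementary W e → ∃ z ∈ K, e ⬝ᵥ z ≤ 0) (σ : Fin n → SignType) :
    ∃ z ∈ K, ∀ e, IsElementary W e → (∀ i, SignType.sign (e i) = σ i) → e ⬝ᵥ z ≤ 0 := by
  by_cases hσ : ∃ e₀, IsElementary W e₀ ∧ ∀ i, SignType.sign (e₀ i) = σ i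
  · obtain ⟨e₀, he₀, hs₀⟩ := hσ
    obtain ⟨z, hz, hz₀⟩ := h e₀ he₀
    refine ⟨z, hz, fun e he hs => ?_⟩
    obtain ⟨c, hc, rfl⟩ := he₀.exists_pos_smul_eq he fun i => (hs i).trans (hs₀ i).symm
    rw [smul_dotProduct, smul_eq_mul]
    exact mul_nonpos_of_nonneg_of_nonpos hc.le hz₀
  · simp only [not_exists, not_and] at hσ
    obtain ⟨z, hz⟩ := hK
    exact ⟨z, hz, fun e he hs => absurd hs (hσ e he)⟩

theorem minty_elementary {n : ℕ} (V : Submodule ℝ (Fin n → ℝ)) (I : Fin n → Set ℝ)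
    (hne : ∀ i, (I i).Nonempty) (hconn : ∀ i, (I i).OrdConnected)
    (hempty : ¬∃ x ∈ V, ∀ i, x i ∈ I i) :
    ∃ v : Fin n → ℝ, IsElementary (perp V) v ∧
      ∀ z : Fin n → ℝ, (∀ i, z i ∈ I i) → 0 < ∑ i, v i * z i := by
  by_contra! hno
  choose z hzI hz using
    exists_mem_forall_sign_eq_dotProduct_nonpos (univ_pi_nonempty_iff.mpr hne)
      fun e he => by simpa [dotProduct] using hno e he
  set B := univ.pi fun i => range fun σ => z σ i
  have hzB : ∀ σ, z σ ∈ B := fun σ i _ => mem_range_self σ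
  have hBI : convexHull ℝ B ⊆ univ.pi I :=
    convexHull_min
      (fun x hx i _ => by obtain ⟨σ, hσ⟩ := hx i trivial; exact hσ ▸ hzI σ i trivial)
      (convex_pi fun i _ => (hconn i).convex)
  obtain ⟨v, hv, hvB⟩ := exists_mem_perp_pos_of_isCompact (convex_convexHull ℝ B)
    ((Finite.pi fun i => finite_range _).isCompact_convexHull ℝ)
    (disjoint_left.mpr fun x hx hxV => hempty ⟨x, hxV, fun i => hBI hx i trivial⟩)
  obtain ⟨e, he, heB⟩ := exists_isElementary_pos_of_pos ⟨_, hzB 0⟩ hv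
    fun x hx => hvB x (subset_convexHull ℝ B hx)
  exact (heB _ (hzB _)).not_ge (hz _ e he fun i => rfl)
end

section
/- The set of sign vectors of a real subspace is closed under composition: for x, y ∈ V ⊆ R^n, the sign vector σ defined by σ_i = sign(x_i) if x_i ≠ 0 and σ_i = sign(y_i) otherwise, belongs to sign(V). Specifically, σ = sign(x + εy) for all sufficiently small ε > 0. -/
/-!
Coordinatewise: where `x i ≠ 0`, the sign is continuous at `x i`, so a small perturbation
`ε * y i` does not change it; where `x i = 0`, `sign (ε * y i) = sign (y i)` for every `ε > 0`.
Finitely many coordinates then share a threshold `ε₀`.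
-/

open scoped Classical

/-- The set of sign vectors of a set of real vectors (sign applied componentwise). -/
def signSet {n : ℕ} (S : Set (Fin n → ℝ)) : Set (Fin n → SignType) :=
  {σ | ∃ x ∈ S, ∀ i, σ i = SignType.sign (x i)}

open Filter Topology

lemma eventually_sign_add_mul_eq (a b : ℝ) :
    ∀ᶠ ε in 𝓝[>] (0 : ℝ),
      (if a ≠ 0 then SignType.sign a else SignType.sign b) = SignType.sign (a + ε * b) := by
  by_cases ha : a = 0
  · filter_upwards [self_mem_nhdsWithin] with ε (hε : 0 < ε)
    simp [ha, sign_mul, sign_pos hε]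
  · have hlin : Tendsto (fun ε : ℝ => a + ε * b) (𝓝 0) (𝓝 a) := by
      simpa using ((continuous_id.mul continuous_const).const_add a).tendsto (0 : ℝ)
    have hsign := (continuousAt_sign_of_ne_zero ha).tendsto.comp hlin
    rw [nhds_discrete SignType, tendsto_pure] at hsign
    filter_upwards [hsign.filter_mono nhdsWithin_le_nhds] with ε hε
    simpa [ha] using hε.symm

theorem signSet_composition {n : ℕ} (V : Submodule ℝ (Fin n → ℝ)) (x y : Fin n → ℝ)
    (hx : x ∈ V) (hy : y ∈ V) :
    (fun i => if x i ≠ 0 then SignType.sign (x i) else SignType.sign (y i)) ∈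
        signSet (V : Set (Fin n → ℝ)) ∧
      ∃ ε₀ > (0 : ℝ), ∀ ε : ℝ, 0 < ε → ε < ε₀ → ∀ i,
        (if x i ≠ 0 then SignType.sign (x i) else SignType.sign (y i)) =
          SignType.sign (x i + ε * y i) := by
  have hev : ∀ᶠ ε in 𝓝[>] (0 : ℝ), ∀ i,
      (if x i ≠ 0 then SignType.sign (x i) else SignType.sign (y i)) =
        SignType.sign (x i + ε * y i) :=
    eventually_all.2 fun i => eventually_sign_add_mul_eq (x i) (y i)
  constructor
  · obtain ⟨ε, hε⟩ := hev.exists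
    exact ⟨x + ε • y, V.add_mem hx (V.smul_mem ε hy), fun i => by simpa using hε i⟩
  · obtain ⟨ε₀, hε₀, hsub⟩ := mem_nhdsGT_iff_exists_Ioo_subset.1 hev
    exact ⟨ε₀, hε₀, fun ε hε hεε₀ => hsub ⟨hε, hεε₀⟩⟩
end

section
/- Every sign vector of a subspace lies below a composition of signs of elementary vectors: for every x ∈ V ⊆ R^n, sign(x) is the composition of sign(v_1), …, sign(v_k) for some elementary vectors v_1,…,v_k of V, each satisfying sign(v_j) ≤ sign(x). -/
/-- The partial order on sign entries `{-,0,+}` in which `0` lies below both `-` and `+`. -/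
def SignLE (a b : SignType) : Prop := a = 0 ∨ a = b

/-- Composition of a list of sign vectors: at each index, take the first nonzero entry. -/
def compList {n : ℕ} (L : List (Fin n → SignType)) : Fin n → SignType :=
  fun i => (L.map (fun σ => σ i)).foldr (fun a b => if a ≠ 0 then a else b) 0

/-! Eliminating along a vector `z` whose support lies in that of `y` — adding the multiple of `z`
that first makes some coordinate vanish — gives a vector conformal to `y` with strictly smaller
support. Inside a nonzero vector of `V` conformal to `x` with minimal support this step would
produce a smaller one, so such a vector is elementary. Subtracting from `x` the right multiple of
such an elementary `v` leaves the signs of `x` outside `support v` untouched and shrinks the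
support, so induction on the support expresses `sign x` as a composition. -/

open Function

theorem SignLE.refl (a : SignType) : SignLE a a := Or.inr rfl

theorem SignLE.trans {a b c : SignType} (hab : SignLE a b) (hbc : SignLE b c) : SignLE a c := by
  rcases hab with rfl | rfl
  · exact Or.inl rfl
  · exact hbc

theorem SignLE.eq_of_ne_zero {a b : SignType} (h : SignLE a b) (ha : a ≠ 0) : a = b :=
  h.resolve_left ha

theorem signLE_sign_add_of_abs_le {G : Type*} [AddCommGroup G] [LinearOrder G]
    [IsOrderedAddMonoid G] {a b : G} (h : |b| ≤ |a|) :
    SignLE (SignType.sign (a + b)) (SignType.sign a) := by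
  rcases eq_or_ne (a + b) 0 with hab | hab
  · exact Or.inl (by rw [hab, sign_zero])
  right
  obtain ⟨hb₁, hb₂⟩ := abs_le.mp h
  rcases lt_trichotomy a 0 with ha | rfl | ha
  · rw [abs_of_neg ha] at hb₂
    rw [sign_neg ha, sign_neg ((le_neg_iff_add_nonpos_left.mp hb₂).lt_of_ne hab)]
  · simp_all
  · rw [abs_of_pos ha] at hb₁
    rw [sign_pos ha, sign_pos ((neg_le_iff_add_nonneg'.mp hb₁).lt_of_ne' hab)]

theorem compList_cons {n : ℕ} (σ : Fin n → SignType) (L : List (Fin n → SignType)) (i : Fin n) :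
    compList (σ :: L) i = if σ i ≠ 0 then σ i else compList L i := rfl

section

variable {ι α : Type*} [Zero α] [LinearOrder α]

def ConformsTo (y x : ι → α) : Prop := ∀ i, SignLE (SignType.sign (y i)) (SignType.sign (x i))

theorem ConformsTo.refl (x : ι → α) : ConformsTo x x := fun _ => SignLE.refl _

theorem ConformsTo.trans {x y z : ι → α} (hxy : ConformsTo x y) (hyz : ConformsTo y z) :
    ConformsTo x z := fun i => (hxy i).trans (hyz i)

theorem ConformsTo.support_subset {y x : ι → α} (h : ConformsTo y x) : support y ⊆ support x := by
  intro i hi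
  have hyi : SignType.sign (y i) ≠ 0 := sign_ne_zero.mpr hi
  exact sign_ne_zero.mp ((h i).eq_of_ne_zero hyi ▸ hyi)

end

section

variable {K : Type*} [Field K] [LinearOrder K] [IsStrictOrderedRing K]

theorem exists_conformsTo_add_smul_of_support_subset {ι : Type*} [Fintype ι] {y z : ι → K}
    (hz : z ≠ 0) (hzy : support z ⊆ support y) :
    ∃ t : K, ConformsTo (y + t • z) y ∧ support (y + t • z) ⊂ support y := by
  -- `t = -(y i₀ / z i₀)` with `i₀` minimizing `|y i / z i|` over the support of `z`
  obtain ⟨i₀, hi₀, hmin⟩ := Finset.exists_min_image (Finset.univ.filter fun i => z i ≠ 0)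
    (fun i => |y i / z i|) (by simpa [Finset.Nonempty, funext_iff] using hz)
  simp only [Finset.mem_filter, Finset.mem_univ, true_and] at hi₀ hmin
  set t := -(y i₀ / z i₀)
  have hconf : ConformsTo (y + t • z) y := by
    intro i
    rcases eq_or_ne (z i) 0 with hzi | hzi
    · simpa [hzi] using SignLE.refl _
    refine signLE_sign_add_of_abs_le ?_
    calc |t * z i| = |y i₀ / z i₀| * |z i| := by rw [abs_mul, abs_neg]
      _ ≤ |y i / z i| * |z i| := mul_le_mul_of_nonneg_right (hmin i hzi) (abs_nonneg _)
      _ = |y i| := by rw [← abs_mul, div_mul_cancel₀ _ hzi]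
  refine ⟨t, hconf, hconf.support_subset.ssubset_of_ne fun h => ?_⟩
  have hi₀y : i₀ ∈ support (y + t • z) := h ▸ hzy hi₀
  exact hi₀y (by simp [t, div_mul_cancel₀ _ hi₀])

theorem exists_isElementary_conformsTo {n : ℕ} (V : Submodule K (Fin n → K)) {x : Fin n → K}
    (hx : x ∈ V) (hx0 : x ≠ 0) : ∃ v, IsElementary V v ∧ ConformsTo v x := by
  obtain ⟨w, ⟨hwV, hw0, hwx⟩, hmin⟩ := (InvImage.wf support wellFounded_lt).has_min
    {w | w ∈ V ∧ w ≠ 0 ∧ ConformsTo w x} ⟨x, hx, hx0, ConformsTo.refl x⟩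
  refine ⟨w, ⟨hwV, hw0, fun z hzV hz0 hzw => ?_⟩, hwx⟩
  by_contra hne
  obtain ⟨t, hconf, hlt⟩ := exists_conformsTo_add_smul_of_support_subset hz0 hzw
  have hne0 : w + t • z ≠ 0 := by
    intro h
    have : support w ⊆ support z := by
      rw [eq_neg_of_add_eq_zero_left h, support_neg]
      exact support_const_smul_subset t z
    exact hne (hzw.antisymm this)
  exact hmin _ ⟨V.add_mem hwV (V.smul_mem t hzV), hne0, hconf.trans hwx⟩ hlt

end

theorem sign_eq_composition_of_cocircuits {n : ℕ} (V : Submodule ℝ (Fin n → ℝ))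
    (x : Fin n → ℝ) (hx : x ∈ V) :
    ∃ L : List (Fin n → ℝ),
      (∀ v ∈ L, IsElementary V v) ∧
      (∀ v ∈ L, ∀ i, SignLE (SignType.sign (v i)) (SignType.sign (x i))) ∧
      compList (L.map (fun v i => SignType.sign (v i))) =
        fun i => SignType.sign (x i) := by
  induction hs : support x using WellFoundedLT.induction generalizing x with | ind s ih
  subst hs
  rcases eq_or_ne x 0 with rfl | hx0
  · exact ⟨[], by simp, by simp, by ext; simp [compList]⟩
  obtain ⟨v, hv, hvx⟩ := exists_isElementary_conformsTo V hx hx0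
  obtain ⟨t, hconf, hlt⟩ := exists_conformsTo_add_smul_of_support_subset hv.2.1 hvx.support_subset
  obtain ⟨L, hLel, hLconf, hLcomp⟩ := ih _ hlt _ (V.add_mem hx (V.smul_mem t hv.1)) rfl
  refine ⟨v :: L, ?_, ?_, ?_⟩
  · simpa using ⟨hv, hLel⟩
  · simpa using ⟨hvx, fun w hw => ConformsTo.trans (hLconf w hw) hconf⟩
  ext i
  rw [List.map_cons, compList_cons, hLcomp]
  rcases eq_or_ne (v i) 0 with hvi | hvi
  · simp [hvi]
  · simpa [hvi] using (hvx i).eq_of_ne_zero (sign_ne_zero.mpr hvi)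
end

section
/- If sign(S) ⊆ cl(sign(S̃)) for subspaces S, S̃ ⊆ R^n, then dim S ≤ dim S̃. -/
/-- The lower closure of a set of sign vectors, with respect to the componentwise
partial order on `{-,0,+}ⁿ` in which `0` lies below both `-` and `+`. -/
def lowerClosureSV {n : ℕ} (T : Set (Fin n → SignType)) : Set (Fin n → SignType) :=
  {σ | ∃ τ ∈ T, ∀ i, σ i = 0 ∨ σ i = τ i}

section SignConformal

variable {R : Type*} [Ring R] [LinearOrder R] [IsStrictOrderedRing R]

theorem mul_pos_of_sign_eq_sign {a b : R} (ha : a ≠ 0) (h : SignType.sign a = SignType.sign b) :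
    0 < a * b := by
  rw [← sign_eq_one_iff, sign_mul, ← h, ← sign_mul, sign_eq_one_iff]
  exact mul_self_pos.mpr ha

theorem mul_nonneg_of_sign_conform {a b : R}
    (h : SignType.sign a = 0 ∨ SignType.sign a = SignType.sign b) : 0 ≤ a * b := by
  by_cases ha : a = 0
  · simp [ha]
  · exact (mul_pos_of_sign_eq_sign ha (h.resolve_left (sign_ne_zero.mpr ha))).le

theorem eq_zero_of_sign_conform_of_dotProduct_eq_zero {ι : Type*} [Fintype ι] {x y : ι → R}
    (hxy : ∀ i, SignType.sign (x i) = 0 ∨ SignType.sign (x i) = SignType.sign (y i))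
    (h : x ⬝ᵥ y = 0) : x = 0 := by
  have hterms :=
    (Finset.sum_eq_zero_iff_of_nonneg fun i _ ↦ mul_nonneg_of_sign_conform (hxy i)).mp h
  funext i
  by_contra hx
  exact (mul_pos_of_sign_eq_sign hx ((hxy i).resolve_left (sign_ne_zero.mpr hx))).ne'
    (hterms i (Finset.mem_univ i))

end SignConformal

theorem exists_sign_conform_of_signSet_subset_lowerClosureSV {n : ℕ} {S T : Set (Fin n → ℝ)}
    (h : signSet S ⊆ lowerClosureSV (signSet T)) {x : Fin n → ℝ} (hx : x ∈ S) :
    ∃ y ∈ T, ∀ i, SignType.sign (x i) = 0 ∨ SignType.sign (x i) = SignType.sign (y i) := by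
  obtain ⟨τ, ⟨y, hy, hτ⟩, hle⟩ := h ⟨x, hx, fun _ ↦ rfl⟩
  exact ⟨y, hy, fun i ↦ hτ i ▸ hle i⟩

theorem finrank_le_of_signSet_subset_closure {n : ℕ}
    (S St : Submodule ℝ (Fin n → ℝ))
    (h : signSet (S : Set (Fin n → ℝ)) ⊆ lowerClosureSV (signSet (St : Set (Fin n → ℝ)))) :
    Module.finrank ℝ S ≤ Module.finrank ℝ St := by
  let pairing : S →ₗ[ℝ] Module.Dual ℝ St := (dotProductBilin ℝ ℝ).domRestrict₁₂ S St
  have hinj : Function.Injective pairing := by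
    rw [← LinearMap.ker_eq_bot, Submodule.eq_bot_iff]
    intro x hx
    obtain ⟨y, hy, hxy⟩ := exists_sign_conform_of_signSet_subset_lowerClosureSV h x.2
    exact Subtype.ext (eq_zero_of_sign_conform_of_dotProduct_eq_zero hxy
      (LinearMap.congr_fun hx ⟨y, hy⟩))
  simpa only [Subspace.dual_finrank_eq] using LinearMap.finrank_le_finrank_of_injective hinj
end
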